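/- Let n ≥ 1 be a natural number and define on [0,1] the continuous piecewise-linear function β by β(x) = x/2 for x ≤ n/(n+2), β(x) = n/(2(n+2)) + (4/5)(x − n/(n+2)) for n/(n+2) < x ≤ (n+1)/(n+2), and β(x) = n/(2(n+2)) + 4/(5(n+2)) + (1/5)(x − (n+1)/(n+2)) for (n+1)/(n+2) < x ≤ 1. Then with β*(x) = x/2, the integral ∫₀¹ ((x − β(x))/β'(x) − x)·(β(x) − β*(x)) dx is strictly positive. -/

import Mathlib

open MeasureTheory Set
open scoped Interval

/-- The piecewise-linear deviation strategy, parametrized by `n`. -/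
noncomputable def minty_beta (n : ℕ) (x : ℝ) : ℝ :=
  if x ≤ n / (n + 2) then x / 2
  else if x ≤ (n + 1) / (n + 2) then n / (2 * (n + 2)) + (4/5) * (x - n / (n + 2))
  else n / (2 * (n + 2)) + 4 / (5 * (n + 2)) + (1/5) * (x - (n + 1) / (n + 2))

/-- Its piecewise derivative. -/
noncomputable def minty_beta' (n : ℕ) (x : ℝ) : ℝ :=
  if x ≤ n / (n + 2) then 1/2
  else if x ≤ (n + 1) / (n + 2) then 4/5
  else 1/5

/-!
Write `a = n/(n+2)` and `h = 1/(n+2)`, so that `β` has kinks at `a` and `a + h` and `1 = a + 2h`.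
On `[0, a]` the strategy `β` is the equilibrium itself and the integrand vanishes. On each of the
two remaining pieces the integrand is a quadratic polynomial: on the middle piece, where `β` is
steeper than `β*`, it is negative and integrates to `-(9/160) a h² - (3/40) h³`; on the last
piece it is positive and integrates to `(9/40) a h² + (3/20) h³`, which wins.
-/

noncomputable def kinkedBid (a h x : ℝ) : ℝ :=
  if x ≤ a then x / 2
  else if x ≤ a + h then a / 2 + 4 / 5 * (x - a)
  else a / 2 + 4 * h / 5 + 1 / 5 * (x - (a + h))

noncomputable def kinkedBidDeriv (a h x : ℝ) : ℝ :=
  if x ≤ a then 1 / 2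
  else if x ≤ a + h then 4 / 5
  else 1 / 5

noncomputable def mintyIntegrand (β β' : ℝ → ℝ) (x : ℝ) : ℝ :=
  ((x - β x) / β' x - x) * (β x - x / 2)

lemma integral_shifted_quadratic (a h p q r : ℝ) :
    ∫ x in a..a + h, (p + q * (x - a) + r * (x - a) ^ 2)
      = p * h + q * h ^ 2 / 2 + r * h ^ 3 / 3 := by
  have hderiv : ∀ x ∈ uIcc a (a + h), HasDerivAt
      (fun x => p * (x - a) + q * (x - a) ^ 2 / 2 + r * (x - a) ^ 3 / 3)
      (p + q * (x - a) + r * (x - a) ^ 2) x := by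
    intro x _
    have hs := (hasDerivAt_id' x).sub_const a
    exact (((hs.const_mul p).add ((hs.pow 2).const_mul q |>.div_const 2)).add
      ((hs.pow 3).const_mul r |>.div_const 3)).congr_deriv (by norm_num; ring)
  rw [intervalIntegral.integral_eq_sub_of_hasDerivAt hderiv
    (Continuous.intervalIntegrable (by fun_prop) _ _)]
  ring

section kinkedBid

variable (a h : ℝ)

lemma mintyIntegrand_kinkedBid_eqOn_first (ha : 0 ≤ a) :
    EqOn (mintyIntegrand (kinkedBid a h) (kinkedBidDeriv a h)) 0 (Ι 0 a) := by
  intro x hx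
  rw [uIoc_of_le ha] at hx
  simp only [mintyIntegrand, kinkedBid, kinkedBidDeriv, if_pos hx.2, Pi.zero_apply]
  ring

lemma mintyIntegrand_kinkedBid_eqOn_middle (hh : 0 ≤ h) :
    EqOn (mintyIntegrand (kinkedBid a h) (kinkedBidDeriv a h))
      (fun x => -(9 / 80) * (x - a) * (a + 2 * (x - a))) (Ι a (a + h)) := by
  intro x hx
  rw [uIoc_of_le (by linarith)] at hx
  simp only [mintyIntegrand, kinkedBid, kinkedBidDeriv, if_neg hx.1.not_ge, if_pos hx.2]
  ring

lemma mintyIntegrand_kinkedBid_eqOn_last (hh : 0 ≤ h) :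
    EqOn (mintyIntegrand (kinkedBid a h) (kinkedBidDeriv a h))
      (fun x => 9 / 20 * (a + h + h - x) * (a + 2 * (x - (a + h)))) (Ι (a + h) (a + h + h)) := by
  intro x hx
  rw [uIoc_of_le (by linarith)] at hx
  have hax : ¬x ≤ a := by linarith [hx.1]
  simp only [mintyIntegrand, kinkedBid, kinkedBidDeriv, if_neg hax, if_neg hx.1.not_ge]
  ring

lemma integral_mintyIntegrand_kinkedBid_first (ha : 0 ≤ a) :
    ∫ x in (0 : ℝ)..a, mintyIntegrand (kinkedBid a h) (kinkedBidDeriv a h) x = 0 := by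
  rw [intervalIntegral.integral_congr_ae
    (ae_of_all _ (mintyIntegrand_kinkedBid_eqOn_first a h ha))]
  simp

lemma integral_mintyIntegrand_kinkedBid_middle (hh : 0 ≤ h) :
    ∫ x in a..a + h, mintyIntegrand (kinkedBid a h) (kinkedBidDeriv a h) x
      = -(9 / 160) * a * h ^ 2 - 3 / 40 * h ^ 3 := by
  rw [intervalIntegral.integral_congr_ae
      (ae_of_all _ (mintyIntegrand_kinkedBid_eqOn_middle a h hh)),
    intervalIntegral.integral_congr
      (g := fun x => 0 + -(9 / 80) * a * (x - a) + -(9 / 40) * (x - a) ^ 2) fun x _ => by ring,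
    integral_shifted_quadratic]
  ring

lemma integral_mintyIntegrand_kinkedBid_last (hh : 0 ≤ h) :
    ∫ x in a + h..a + h + h, mintyIntegrand (kinkedBid a h) (kinkedBidDeriv a h) x
      = 9 / 40 * a * h ^ 2 + 3 / 20 * h ^ 3 := by
  rw [intervalIntegral.integral_congr_ae
      (ae_of_all _ (mintyIntegrand_kinkedBid_eqOn_last a h hh)),
    intervalIntegral.integral_congr (g := fun x => 9 / 20 * a * h
      + 9 / 20 * (2 * h - a) * (x - (a + h)) + -(9 / 10) * (x - (a + h)) ^ 2) fun x _ => by ring,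
    integral_shifted_quadratic]
  ring

theorem integral_mintyIntegrand_kinkedBid (ha : 0 ≤ a) (hh : 0 ≤ h) :
    ∫ x in (0 : ℝ)..a + 2 * h, mintyIntegrand (kinkedBid a h) (kinkedBidDeriv a h) x
      = 27 / 160 * a * h ^ 2 + 3 / 40 * h ^ 3 := by
  have hi₁ := (intervalIntegrable_congr (μ := volume)
    (mintyIntegrand_kinkedBid_eqOn_first a h ha)).mpr intervalIntegrable_const
  have hi₂ := (intervalIntegrable_congr (μ := volume)
    (mintyIntegrand_kinkedBid_eqOn_middle a h hh)).mpr
    (Continuous.intervalIntegrable (by fun_prop) _ _)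
  have hi₃ := (intervalIntegrable_congr (μ := volume)
    (mintyIntegrand_kinkedBid_eqOn_last a h hh)).mpr
    (Continuous.intervalIntegrable (by fun_prop) _ _)
  rw [show a + 2 * h = a + h + h by ring,
    ← intervalIntegral.integral_add_adjacent_intervals (hi₁.trans hi₂) hi₃,
    ← intervalIntegral.integral_add_adjacent_intervals hi₁ hi₂,
    integral_mintyIntegrand_kinkedBid_first a h ha, integral_mintyIntegrand_kinkedBid_middle a h hh,
    integral_mintyIntegrand_kinkedBid_last a h hh]
  ring

end kinkedBid

lemma minty_beta_eq_kinkedBid (n : ℕ) :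
    minty_beta n = kinkedBid (n / (n + 2)) (1 / (n + 2)) := by
  have hkink : ((n : ℝ) + 1) / (n + 2) = n / (n + 2) + 1 / (n + 2) := by ring
  funext x
  simp only [minty_beta, kinkedBid, hkink]
  split_ifs <;> field_simp

lemma minty_beta'_eq_kinkedBidDeriv (n : ℕ) :
    minty_beta' n = kinkedBidDeriv (n / (n + 2)) (1 / (n + 2)) := by
  have hkink : ((n : ℝ) + 1) / (n + 2) = n / (n + 2) + 1 / (n + 2) := by ring
  funext x
  simp only [minty_beta', kinkedBidDeriv, hkink]

theorem first_price_minty_violated_general (n : ℕ) :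
    0 < ∫ x in (0:ℝ)..1,
      ((x - minty_beta n x) / minty_beta' n x - x) * (minty_beta n x - x / 2) := by
  have hend : (1 : ℝ) = n / (n + 2) + 2 * (1 / (n + 2)) := by field_simp
  have key := integral_mintyIntegrand_kinkedBid (n / (n + 2) : ℝ) (1 / (n + 2)) (by positivity)
    (by positivity)
  rw [← hend, ← minty_beta_eq_kinkedBid, ← minty_beta'_eq_kinkedBidDeriv] at key
  simp only [mintyIntegrand] at key
  rw [key]
  positivity

theorem first_price_minty_violated (n : ℕ) (hn : 1 ≤ n) :
    0 < ∫ x in (0:ℝ)..1,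
      ((x - minty_beta n x) / minty_beta' n x - x) * (minty_beta n x - x / 2) :=
  first_price_minty_violated_general n
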